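/- For integers 0 ≤ k ≤ a < b, one has the rational function identity 1/[a+k choose k]_q − 1/[b+k choose k]_q = ∑_{i=1}^{k} q^{a+i} · ((1−q^{b−a})/(1−q^{b+i})) · ∏_{j=i}^{k} (1−q^j)/(1−q^{a+j}) · ∏_{j=1}^{i−1} (1−q^j)/(1−q^{b+j}). -/
import Mathlib


open Finset

/-- The Gaussian binomial coefficient `[n choose k]_q` over `ℚ`, via the
q-Pascal recurrence. -/
noncomputable def qbinomQ : ℕ → ℕ → Polynomial ℚ
  | _, 0 => 1
  | 0, _ + 1 => 0
  | n + 1, k + 1 => qbinomQ n k + Polynomial.X ^ (k + 1) * qbinomQ n (k + 1)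
  termination_by n k => (n, k)

lemma qbinomQ_zero (n : ℕ) : qbinomQ n 0 = 1 := by cases n <;> simp [qbinomQ]

lemma qbinomQ_eq_zero : ∀ n k : ℕ, n < k → qbinomQ n k = 0
  | 0, k + 1, _ => by simp [qbinomQ]
  | n + 1, k + 1, h => by
    rw [qbinomQ, qbinomQ_eq_zero n k (by omega), qbinomQ_eq_zero n (k+1) (by omega)]
    ring

lemma qbinomQ_self : ∀ n : ℕ, qbinomQ n n = 1
  | 0 => qbinomQ_zero 0
  | n + 1 => by
    rw [qbinomQ, qbinomQ_self n, qbinomQ_eq_zero n (n+1) (by omega)]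
    ring

lemma prod_Icc_shift {M : Type*} [CommMonoid M] (f : ℕ → M) (k : ℕ) :
    ∏ j ∈ Icc 1 (k+1), f j = f 1 * ∏ j ∈ Icc 1 k, f (j+1) := by
  induction k with
  | zero => simp
  | succ k ih =>
    rw [Finset.prod_Icc_succ_top (by omega) f, ih,
      Finset.prod_Icc_succ_top (by omega) (fun j => f (j+1)), mul_assoc]

lemma qbinomQ_mul_prod : ∀ k m : ℕ,
    qbinomQ (m + k) k * ∏ j ∈ Icc 1 k, (1 - (Polynomial.X : Polynomial ℚ) ^ j) =
      ∏ j ∈ Icc 1 k, (1 - (Polynomial.X : Polynomial ℚ) ^ (m + j))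
  | 0, m => by simp [qbinomQ_zero]
  | k + 1, 0 => by
    rw [Nat.zero_add, qbinomQ_self]
    simp
  | k + 1, m + 1 => by
    have h1 : m + 1 + (k + 1) = (m + 1 + k) + 1 := by omega
    rw [h1, qbinomQ]
    have ihk : qbinomQ ((m+1) + k) k * ∏ j ∈ Icc 1 k, (1 - (Polynomial.X : Polynomial ℚ) ^ j)
        = ∏ j ∈ Icc 1 k, (1 - (Polynomial.X : Polynomial ℚ) ^ (m + 1 + j)) :=
      qbinomQ_mul_prod k (m+1)
    have ihm : qbinomQ (m + (k+1)) (k+1) * ∏ j ∈ Icc 1 (k+1), (1 - (Polynomial.X : Polynomial ℚ) ^ j)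
        = ∏ j ∈ Icc 1 (k+1), (1 - (Polynomial.X : Polynomial ℚ) ^ (m + j)) :=
      qbinomQ_mul_prod (k+1) m
    have shift : ∏ j ∈ Icc 1 (k+1), (1 - (Polynomial.X : Polynomial ℚ) ^ (m + j))
        = (1 - Polynomial.X ^ (m+1)) * ∏ j ∈ Icc 1 k, (1 - (Polynomial.X : Polynomial ℚ) ^ (m + 1 + j)) := by
      rw [prod_Icc_shift (fun j => (1 - (Polynomial.X : Polynomial ℚ) ^ (m + j)))]
      congr 1
      exact Finset.prod_congr rfl fun j _ => by rw [show m + (j+1) = m + 1 + j by omega]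
    rw [shift, Finset.prod_Icc_succ_top (f := fun j => (1 - (Polynomial.X : Polynomial ℚ) ^ j)) (by omega)] at ihm
    rw [show m + (k+1) = m + 1 + k by omega] at ihm
    rw [Finset.prod_Icc_succ_top (f := fun j => (1 - (Polynomial.X : Polynomial ℚ) ^ (m + 1 + j))) (by omega),
      Finset.prod_Icc_succ_top (f := fun j => (1 - (Polynomial.X : Polynomial ℚ) ^ j)) (by omega)]
    rw [show (Polynomial.X : Polynomial ℚ) ^ (m + 1 + (k + 1)) = Polynomial.X ^ (k+1) * Polynomial.X ^ (m+1) by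
      rw [← pow_add]; congr 1; omega]
    linear_combination (1 - (Polynomial.X : Polynomial ℚ) ^ (k+1)) * ihk + (Polynomial.X : Polynomial ℚ) ^ (k+1) * ihm

lemma telescope {R : Type*} [CommRing R] (A B : ℕ → R) : ∀ k : ℕ,
    ∏ j ∈ Icc 1 k, A j - ∏ j ∈ Icc 1 k, B j =
      ∑ i ∈ Icc 1 k, (A i - B i) * (∏ j ∈ Icc (i+1) k, A j) * (∏ j ∈ Icc 1 (i-1), B j)
  | 0 => by simp
  | k + 1 => by
    rw [Finset.prod_Icc_succ_top (by omega) A, Finset.prod_Icc_succ_top (by omega) B,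
      Finset.sum_Icc_succ_top (by omega)]
    have step : ∑ i ∈ Icc 1 k, (A i - B i) * (∏ j ∈ Icc (i+1) (k+1), A j) * (∏ j ∈ Icc 1 (i-1), B j)
        = (∑ i ∈ Icc 1 k, (A i - B i) * (∏ j ∈ Icc (i+1) k, A j) * (∏ j ∈ Icc 1 (i-1), B j)) * A (k+1) := by
      rw [Finset.sum_mul]
      refine Finset.sum_congr rfl fun i hi => ?_
      have hik : i ≤ k := (Finset.mem_Icc.mp hi).2
      rw [Finset.prod_Icc_succ_top (by omega) A]
      ring
    rw [step, show Icc (k+1+1) (k+1) = (∅ : Finset ℕ) from by rw [Finset.Icc_eq_empty_iff]; omega,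
      show k+1-1 = k from by omega, Finset.prod_empty]
    linear_combination A (k+1) * telescope A B k

lemma one_sub_X_pow_ne_zero (n : ℕ) (hn : 1 ≤ n) : (1 - RatFunc.X ^ n : RatFunc ℚ) ≠ 0 := by
  have h : (1 - RatFunc.X ^ n : RatFunc ℚ)
      = algebraMap (Polynomial ℚ) _ (1 - Polynomial.X ^ n) := by
    simp [RatFunc.algebraMap_X]
  rw [h]
  apply RatFunc.algebraMap_ne_zero
  intro hz
  have := congrArg (fun p => Polynomial.coeff p n) hz
  simp only [Polynomial.coeff_sub, Polynomial.coeff_one, Polynomial.coeff_X_pow,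
    Polynomial.coeff_zero, if_neg (by omega : ¬ n = 0), if_pos rfl] at this
  norm_num at this

lemma inv_qbinom (m k : ℕ) :
    1 / algebraMap (Polynomial ℚ) (RatFunc ℚ) (qbinomQ (m + k) k)
      = ∏ j ∈ Icc 1 k, (1 - RatFunc.X ^ j) / (1 - RatFunc.X ^ (m + j)) := by
  have key := congrArg (algebraMap (Polynomial ℚ) (RatFunc ℚ)) (qbinomQ_mul_prod k m)
  simp only [map_mul, map_prod, map_sub, map_one, map_pow, RatFunc.algebraMap_X] at key
  have hP : (∏ j ∈ Icc 1 k, (1 - RatFunc.X ^ j) : RatFunc ℚ) ≠ 0 :=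
    Finset.prod_ne_zero_iff.mpr fun j hj => one_sub_X_pow_ne_zero j (Finset.mem_Icc.mp hj).1
  have hQ : (∏ j ∈ Icc 1 k, (1 - RatFunc.X ^ (m + j)) : RatFunc ℚ) ≠ 0 :=
    Finset.prod_ne_zero_iff.mpr fun j hj =>
      one_sub_X_pow_ne_zero (m + j) (by have := (Finset.mem_Icc.mp hj).1; omega)
  have hq : algebraMap (Polynomial ℚ) (RatFunc ℚ) (qbinomQ (m + k) k) ≠ 0 := by
    intro h0
    rw [h0, zero_mul] at key
    exact hQ key.symm
  rw [Finset.prod_div_distrib, eq_div_iff hQ, one_div, inv_mul_eq_div, div_eq_iff hq, mul_comm]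
  exact key.symm

/-- For integers `0 ≤ k ≤ a < b`, as rational functions in `q`:
`1/[a+k choose k]_q − 1/[b+k choose k]_q
  = ∑_{i=1}^{k} q^{a+i} ((1−q^{b−a})/(1−q^{b+i})) ∏_{j=i}^{k} (1−q^j)/(1−q^{a+j})
      ∏_{j=1}^{i−1} (1−q^j)/(1−q^{b+j})`. -/
theorem inv_qbinom_diff (a b k : ℕ) (hka : k ≤ a) (hab : a < b) :
    1 / algebraMap (Polynomial ℚ) (RatFunc ℚ) (qbinomQ (a + k) k) -
      1 / algebraMap (Polynomial ℚ) (RatFunc ℚ) (qbinomQ (b + k) k) =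
    ∑ i ∈ Finset.Icc 1 k,
      RatFunc.X ^ (a + i) *
        ((1 - RatFunc.X ^ (b - a)) / (1 - RatFunc.X ^ (b + i))) *
        (∏ j ∈ Finset.Icc i k, (1 - RatFunc.X ^ j) / (1 - RatFunc.X ^ (a + j))) *
        (∏ j ∈ Finset.Icc 1 (i - 1), (1 - RatFunc.X ^ j) / (1 - RatFunc.X ^ (b + j))) := by
  rw [inv_qbinom a k, inv_qbinom b k,
    telescope (fun j => ((1 - RatFunc.X ^ j) / (1 - RatFunc.X ^ (a + j)) : RatFunc ℚ))
      (fun j => ((1 - RatFunc.X ^ j) / (1 - RatFunc.X ^ (b + j)) : RatFunc ℚ)) k]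
  refine Finset.sum_congr rfl fun i hi => ?_
  obtain ⟨hi1, hik⟩ := Finset.mem_Icc.mp hi
  have hsplit : (∏ j ∈ Icc i k, ((1 - RatFunc.X ^ j) / (1 - RatFunc.X ^ (a + j)) : RatFunc ℚ))
      = ((1 - RatFunc.X ^ i) / (1 - RatFunc.X ^ (a + i))) *
        ∏ j ∈ Icc (i+1) k, (1 - RatFunc.X ^ j) / (1 - RatFunc.X ^ (a + j)) := by
    rw [Finset.Icc_add_one_left_eq_Ioc]
    exact (Finset.mul_prod_Ioc_eq_prod_Icc hik).symm
  rw [hsplit]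
  have hterm : (1 - RatFunc.X ^ i) / (1 - RatFunc.X ^ (a+i))
        - (1 - RatFunc.X ^ i) / (1 - RatFunc.X ^ (b+i))
      = RatFunc.X ^ (a+i) * ((1 - RatFunc.X ^ (b-a)) / (1 - RatFunc.X ^ (b+i)))
        * ((1 - RatFunc.X ^ i) / (1 - RatFunc.X ^ (a+i)) : RatFunc ℚ) := by
    obtain ⟨d, rfl⟩ : ∃ d, b = a + (d + 1) := ⟨b - a - 1, by omega⟩
    have h1 := one_sub_X_pow_ne_zero (a+i) (by omega)
    have h2 := one_sub_X_pow_ne_zero (a+(d+1)+i) (by omega)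
    rw [show a + (d+1) - a = d + 1 by omega]
    field_simp
    ring
  rw [hterm]
  ring
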